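/- arXiv:1708.08110 — 2 statements merged into one kernel-verified Lean document; each statement's English description precedes it below -/
import Mathlib

section
/- For ω ∈ (0, 2π) and m ≥ 1, define F_m(ω) = (∑_{ℓ∈ℤ} |ω+2πℓ|^{-2m}) / (∑_{ℓ∈ℤ} |ω+2πℓ|^{-2m-2}). Then F_m attains its maximum on (0, 2π) at ω = π. -/
/-!
Laplace transform: `n! |x|^{-(n+1)} = ∫₀^∞ sⁿ e^{-|x|s} ds` for `x ≠ 0`, and summing two geometric
series gives `∑_ℓ e^{-|θ+2πℓ|s} = cosh((π-θ)s) / sinh(πs)` for `θ ∈ [0, 2π]`. Hence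
`n! ∑_ℓ |θ+2πℓ|^{-(n+1)} = K_n(π-θ)` with `K_n(τ) = ∫₀^∞ sⁿ cosh(τs) / sinh(πs) ds`.
Against the weight `sⁿ / sinh(πs) ds` the functions `s²` and `cosh(τs)` are similarly ordered, so
Chebyshev's integral inequality gives `K_n(τ) K_{n+2}(0) ≤ K_n(0) K_{n+2}(τ)`, which for
`n = 2m - 1` and `τ = π - ω` is `F_m(ω) ≤ F_m(π)`. Working with lower Lebesgue integrals in `ℝ≥0∞`
avoids all integrability side conditions.
-/

open Real

/-- The ratio `F_m(ω) = (∑_{ℓ∈ℤ} |ω+2πℓ|^{-2m}) / (∑_{ℓ∈ℤ} |ω+2πℓ|^{-2m-2})`. -/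
noncomputable def Fratio (m : ℕ) (ω : ℝ) : ℝ :=
  (∑' ℓ : ℤ, 1 / |ω + 2 * π * ℓ| ^ (2 * m)) /
    (∑' ℓ : ℤ, 1 / |ω + 2 * π * ℓ| ^ (2 * m + 2))

open MeasureTheory Set
open scoped Nat ENNReal

theorem lintegral_pow_mul_exp_neg_mul (n : ℕ) {c : ℝ} (hc : 0 < c) :
    ∫⁻ s in Ioi (0 : ℝ), ENNReal.ofReal (s ^ n * exp (-(c * s))) =
      ENNReal.ofReal (n ! / c ^ (n + 1)) := by
  have hrpow : EqOn (fun s : ℝ => s ^ ((n + 1 : ℝ) - 1) * exp (-(c * s)))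
      (fun s => s ^ n * exp (-(c * s))) (Ioi 0) := fun s _ => by
    simp only [add_sub_cancel_right, rpow_natCast]
  have hint : IntegrableOn (fun s : ℝ => s ^ n * exp (-(c * s))) (Ioi 0) := by
    refine (integrableOn_rpow_mul_exp_neg_mul_rpow (p := 1) (s := n) (b := c)
      (by linarith [n.cast_nonneg (α := ℝ)]) one_pos hc).congr_fun (fun s _ => ?_) measurableSet_Ioi
    simp only [rpow_one, rpow_natCast, neg_mul]
  rw [← ofReal_integral_eq_lintegral_ofReal hint
      ((ae_restrict_mem measurableSet_Ioi).mono fun s (hs : 0 < s) => by positivity),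
    ← setIntegral_congr_fun measurableSet_Ioi hrpow,
    integral_rpow_mul_exp_neg_mul_Ioi (by positivity) hc, Gamma_nat_eq_factorial,
    ← Nat.cast_succ, rpow_natCast, div_pow, one_pow, one_div_mul_eq_div]

theorem hasSum_exp_neg_abs_add_two_pi_mul_int_mul {θ s : ℝ} (hθ : θ ∈ Icc 0 (2 * π))
    (hs : 0 < s) :
    HasSum (fun ℓ : ℤ => exp (-(|θ + 2 * π * ℓ| * s))) (cosh ((π - θ) * s) / sinh (π * s)) := by
  obtain ⟨hθ0, hθ2π⟩ := hθ
  set r := exp (-(2 * π * s))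
  have hr : r < 1 := exp_lt_one_iff.mpr (by nlinarith [pi_pos])
  have hgeom := hasSum_geometric_of_lt_one (exp_pos _).le hr
  have hnonneg : HasSum (fun n : ℕ => exp (-(|θ + 2 * π * (n : ℤ)| * s)))
      (exp (-(θ * s)) * (1 - r)⁻¹) := by
    refine (hgeom.mul_left _).congr_fun fun n => ?_
    rw [Int.cast_natCast, abs_of_nonneg (by positivity), ← exp_nat_mul, ← exp_add]
    ring_nf
  have hneg : HasSum (fun n : ℕ => exp (-(|θ + 2 * π * ((-(n + 1) : ℤ) : ℝ)| * s)))
      (exp (-((2 * π - θ) * s)) * (1 - r)⁻¹) := by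
    refine (hgeom.mul_left _).congr_fun fun n => ?_
    push_cast
    rw [abs_of_nonpos (by nlinarith [pi_pos, n.cast_nonneg (α := ℝ)]), ← exp_nat_mul, ← exp_add]
    ring_nf
  suffices hval : cosh ((π - θ) * s) / sinh (π * s) =
      exp (-(θ * s)) * (1 - r)⁻¹ + exp (-((2 * π - θ) * s)) * (1 - r)⁻¹ by
    rw [hval]; exact hnonneg.of_nat_of_neg_add_one hneg
  have hsinh : sinh (π * s) = exp (π * s) * (1 - r) / 2 := by
    rw [sinh_eq, mul_sub, mul_one, ← exp_add]; ring_nf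
  rw [hsinh, cosh_eq, ← add_mul, div_div_eq_mul_div, div_mul_cancel₀ _ two_ne_zero, ← div_div,
    div_eq_mul_inv _ (1 - r), div_eq_mul_inv, ← exp_neg, add_mul, ← exp_add, ← exp_add]
  ring_nf

theorem pi_mem_Ioo_zero_two_pi : π ∈ Ioo 0 (2 * π) :=
  ⟨pi_pos, by linarith [pi_pos]⟩

theorem abs_add_two_pi_mul_int_pos {θ : ℝ} (hθ : θ ∈ Ioo 0 (2 * π)) (ℓ : ℤ) :
    0 < |θ + 2 * π * ℓ| := by
  obtain ⟨h0, h2π⟩ := hθ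
  rw [abs_pos]
  rcases le_or_gt 0 ℓ with hℓ | hℓ
  · nlinarith [pi_pos, (Int.cast_nonneg hℓ : (0 : ℝ) ≤ ℓ)]
  · have : (ℓ : ℝ) ≤ -1 := by exact_mod_cast Int.le_sub_one_of_lt hℓ
    nlinarith [pi_pos]

/-- `K_n(τ)`; the integrand is arranged so that `ENNReal.ofReal` splits off its nonnegative last
factor for every `s`. -/
noncomputable def coshSinhMoment (n : ℕ) (τ : ℝ) : ℝ≥0∞ :=
  ∫⁻ s in Ioi (0 : ℝ), ENNReal.ofReal (s ^ n / sinh (π * s) * cosh (τ * s))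

theorem tsum_ofReal_one_div_abs_pow_mul_factorial_eq_coshSinhMoment {θ : ℝ}
    (hθ : θ ∈ Ioo 0 (2 * π)) (n : ℕ) :
    (∑' ℓ : ℤ, ENNReal.ofReal (1 / |θ + 2 * π * ℓ| ^ (n + 1))) * n ! =
      coshSinhMoment n (π - θ) := by
  have hterm (ℓ : ℤ) : ENNReal.ofReal (1 / |θ + 2 * π * ℓ| ^ (n + 1)) * n ! =
      ∫⁻ s in Ioi (0 : ℝ), ENNReal.ofReal (s ^ n * exp (-(|θ + 2 * π * ℓ| * s))) := by
    rw [lintegral_pow_mul_exp_neg_mul n (abs_add_two_pi_mul_int_pos hθ ℓ),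
      ← ENNReal.ofReal_natCast, ← ENNReal.ofReal_mul (by positivity), one_div_mul_eq_div]
  rw [← ENNReal.tsum_mul_right, tsum_congr hterm,
    ← lintegral_tsum fun ℓ => (Measurable.ennreal_ofReal (by fun_prop)).aemeasurable]
  refine setLIntegral_congr_fun measurableSet_Ioi fun s (hs : 0 < s) => ?_
  have hsum :=
    (hasSum_exp_neg_abs_add_two_pi_mul_int_mul (Ioo_subset_Icc_self hθ) hs).mul_left (s ^ n)
  rw [← ENNReal.ofReal_tsum_of_nonneg (fun ℓ => by positivity) hsum.summable, hsum.tsum_eq]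
  congr 1
  ring

theorem lintegral_mul_lintegral_le_measure_univ_mul_lintegral {α : Type*} [MeasurableSpace α]
    {μ : Measure α} {f g : α → ℝ≥0∞} (hf : Measurable f) (hg : Measurable g)
    (hfg : ∀ x y, f x * g y + f y * g x ≤ f x * g x + f y * g y) :
    (∫⁻ x, f x ∂μ) * ∫⁻ x, g x ∂μ ≤ μ univ * ∫⁻ x, f x * g x ∂μ := by
  have hfg' : Measurable fun x => f x * g x := hf.mul hg
  have hdouble : 2 * ((∫⁻ x, f x ∂μ) * ∫⁻ x, g x ∂μ) ≤ 2 * (μ univ * ∫⁻ x, f x * g x ∂μ) :=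
    calc 2 * ((∫⁻ x, f x ∂μ) * ∫⁻ x, g x ∂μ)
        = ∫⁻ x, ∫⁻ y, (f x * g y + f y * g x) ∂μ ∂μ := by
          have hinner (x : α) : ∫⁻ y, (f x * g y + f y * g x) ∂μ =
              f x * ∫⁻ y, g y ∂μ + (∫⁻ y, f y ∂μ) * g x := by
            rw [lintegral_add_left (hg.const_mul _), lintegral_const_mul _ hg,
              lintegral_mul_const _ hf]
          simp_rw [hinner]
          rw [lintegral_add_left (hf.mul_const _), lintegral_mul_const _ hf,
            lintegral_const_mul _ hg]
          ring
      _ ≤ ∫⁻ x, ∫⁻ y, (f x * g x + f y * g y) ∂μ ∂μ :=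
          lintegral_mono fun x => lintegral_mono fun y => hfg x y
      _ = 2 * (μ univ * ∫⁻ x, f x * g x ∂μ) := by
          simp_rw [lintegral_add_left measurable_const, lintegral_const]
          rw [lintegral_add_left (hfg'.mul_const _), lintegral_mul_const _ hfg', lintegral_const]
          ring
  exact (ENNReal.mul_le_mul_iff_right two_ne_zero ENNReal.ofNat_ne_top).mp hdouble

theorem sq_sub_sq_mul_cosh_sub_cosh_nonneg (τ x y : ℝ) :
    0 ≤ (x ^ 2 - y ^ 2) * (cosh (τ * x) - cosh (τ * y)) := by
  have hcosh {a b : ℝ} (hab : |a| ≤ |b|) : cosh (τ * a) ≤ cosh (τ * b) := by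
    rw [cosh_le_cosh, abs_mul, abs_mul]
    exact mul_le_mul_of_nonneg_left hab (abs_nonneg τ)
  rcases le_total |x| |y| with hxy | hyx
  · exact mul_nonneg_of_nonpos_of_nonpos (sub_nonpos.mpr (sq_le_sq.mpr hxy))
      (sub_nonpos.mpr (hcosh hxy))
  · exact mul_nonneg (sub_nonneg.mpr (sq_le_sq.mpr hyx)) (sub_nonneg.mpr (hcosh hyx))

theorem coshSinhMoment_mul_le (n : ℕ) (τ : ℝ) :
    coshSinhMoment n τ * coshSinhMoment (n + 2) 0 ≤
      coshSinhMoment n 0 * coshSinhMoment (n + 2) τ := by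
  set μ := (volume.restrict (Ioi (0 : ℝ))).withDensity
    fun s => ENNReal.ofReal (s ^ n / sinh (π * s))
  have hμ {h : ℝ → ℝ} (hh : Measurable h) (h0 : ∀ s, 0 ≤ h s) :
      ∫⁻ s, ENNReal.ofReal (h s) ∂μ =
        ∫⁻ s in Ioi (0 : ℝ), ENNReal.ofReal (s ^ n / sinh (π * s) * h s) := by
    rw [lintegral_withDensity_eq_lintegral_mul _ (by fun_prop) hh.ennreal_ofReal]
    simp only [Pi.mul_apply, ENNReal.ofReal_mul' (h0 _)]
  have hcosh0 (s : ℝ) : 0 ≤ cosh (τ * s) := (cosh_pos _).le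
  have hprod0 (x y : ℝ) : 0 ≤ x ^ 2 * cosh (τ * y) := mul_nonneg (sq_nonneg x) (hcosh0 y)
  have hcheb := lintegral_mul_lintegral_le_measure_univ_mul_lintegral (μ := μ)
    (f := fun s => ENNReal.ofReal (s ^ 2)) (g := fun s => ENNReal.ofReal (cosh (τ * s)))
    (by fun_prop) (by fun_prop) fun x y => by
      simp only [← ENNReal.ofReal_mul (sq_nonneg _),
        ← ENNReal.ofReal_add (hprod0 _ _) (hprod0 _ _)]
      exact ENNReal.ofReal_le_ofReal (by nlinarith [sq_sub_sq_mul_cosh_sub_cosh_nonneg τ x y])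
  simp only [← ENNReal.ofReal_mul (sq_nonneg _)] at hcheb
  rw [hμ (by fun_prop) sq_nonneg, hμ (by fun_prop) hcosh0,
    hμ (h := fun s => s ^ 2 * cosh (τ * s)) (by fun_prop) fun s => hprod0 s s,
    ← lintegral_one, ← ENNReal.ofReal_one, hμ measurable_const fun _ => zero_le_one] at hcheb
  have hshift (c : ℝ → ℝ) :
      ∫⁻ s in Ioi (0 : ℝ), ENNReal.ofReal (s ^ (n + 2) / sinh (π * s) * c s) =
        ∫⁻ s in Ioi (0 : ℝ), ENNReal.ofReal (s ^ n / sinh (π * s) * (s ^ 2 * c s)) := by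
    congr 1; funext s; ring_nf
  simp only [coshSinhMoment, zero_mul, cosh_zero]
  rw [hshift, hshift, mul_comm]
  simpa only [mul_one] using hcheb

theorem summable_one_div_abs_add_two_pi_mul_int_pow (θ : ℝ) {k : ℕ} (hk : 1 < k) :
    Summable fun ℓ : ℤ => 1 / |θ + 2 * π * ℓ| ^ k := by
  refine (((summable_one_div_int_add_rpow (θ / (2 * π)) k).mpr (by exact_mod_cast hk)).mul_left
    (1 / (2 * π) ^ k)).congr fun ℓ => ?_
  have hscale : θ + 2 * π * ℓ = 2 * π * (ℓ + θ / (2 * π)) := by field_simp; ring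
  rw [rpow_natCast, hscale, abs_mul, abs_of_pos two_pi_pos, mul_pow (2 * π), one_div_mul_one_div]

theorem tsum_one_div_abs_add_two_pi_mul_int_pow_pos {θ : ℝ} (hθ : θ ∈ Ioo 0 (2 * π)) {k : ℕ}
    (hk : 1 < k) : 0 < ∑' ℓ : ℤ, 1 / |θ + 2 * π * ℓ| ^ k :=
  (summable_one_div_abs_add_two_pi_mul_int_pow θ hk).tsum_pos (fun _ => by positivity) 0
    (by have := abs_add_two_pi_mul_int_pos hθ 0; positivity)

theorem tsum_one_div_abs_pow_mul_le_at_pi {θ : ℝ} (hθ : θ ∈ Ioo 0 (2 * π)) {k : ℕ} (hk : 1 < k) :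
    (∑' ℓ : ℤ, 1 / |θ + 2 * π * ℓ| ^ k) * ∑' ℓ : ℤ, 1 / |π + 2 * π * ℓ| ^ (k + 2) ≤
      (∑' ℓ : ℤ, 1 / |π + 2 * π * ℓ| ^ k) * ∑' ℓ : ℤ, 1 / |θ + 2 * π * ℓ| ^ (k + 2) := by
  obtain ⟨n, rfl⟩ : ∃ n, k = n + 1 := ⟨k - 1, by omega⟩
  have hofReal (ω : ℝ) (j : ℕ) (hj : 1 < j) :
      ENNReal.ofReal (∑' ℓ : ℤ, 1 / |ω + 2 * π * ℓ| ^ j) =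
        ∑' ℓ : ℤ, ENNReal.ofReal (1 / |ω + 2 * π * ℓ| ^ j) :=
    ENNReal.ofReal_tsum_of_nonneg (fun _ => by positivity)
      (summable_one_div_abs_add_two_pi_mul_int_pow ω hj)
  have hfact : ((n ! * (n + 2) ! : ℕ) : ℝ≥0∞) ≠ 0 := by positivity
  rw [← ENNReal.ofReal_le_ofReal_iff (by positivity), ENNReal.ofReal_mul (by positivity),
    ENNReal.ofReal_mul (by positivity), hofReal θ _ hk, hofReal π _ hk, hofReal θ _ (by omega),
    hofReal π _ (by omega), ← ENNReal.mul_le_mul_iff_left hfact (ENNReal.natCast_ne_top _)]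
  have hθK := tsum_ofReal_one_div_abs_pow_mul_factorial_eq_coshSinhMoment hθ
  have hπK := tsum_ofReal_one_div_abs_pow_mul_factorial_eq_coshSinhMoment pi_mem_Ioo_zero_two_pi
  rw [sub_self] at hπK
  calc _ = coshSinhMoment n (π - θ) * coshSinhMoment (n + 2) 0 := by
          rw [← hθK, ← hπK, Nat.cast_mul]; ring
    _ ≤ coshSinhMoment n 0 * coshSinhMoment (n + 2) (π - θ) := coshSinhMoment_mul_le n (π - θ)
    _ = _ := by rw [← hθK, ← hπK, Nat.cast_mul]; ring

theorem Fratio_max_at_pi (m : ℕ) (hm : 1 ≤ m) (ω : ℝ) (hω : ω ∈ Set.Ioo 0 (2 * π)) :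
    Fratio m ω ≤ Fratio m π := by
  rw [Fratio, Fratio, div_le_div_iff₀ (tsum_one_div_abs_add_two_pi_mul_int_pow_pos hω (by omega))
    (tsum_one_div_abs_add_two_pi_mul_int_pow_pos pi_mem_Ioo_zero_two_pi (by omega))]
  exact tsum_one_div_abs_pow_mul_le_at_pi hω (by omega)
end

section
/- For m ≥ 1, all roots of the Euler–Frobenius polynomial E_{2m-1}(z) (the polynomial with coefficients N_{2m-1}(j), j=1,…,2m-1, i.e. ∑_{j} N_{2m-1}(j) z^{j-1}) are real, negative, and simple. -/
/-!
The numbers `n! N_n(j+1)` are the Eulerian numbers, so `E_n` is the Eulerian polynomial `A_n`.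
The function `t A_n(t) / (1 - t)^(n+1)` (which is `∑_{k ≥ 1} k^n t^k` near `0`) has derivative
`A_{n+1}(t) / (1 - t)^(n+2)`. It vanishes at `0` and at the negative roots of `A_n`, and tends
to `0` at `-∞`; Rolle's theorem on each gap, and on the unbounded gap to the left, gives one more
negative root of `A_{n+1}` than `A_n` has. Inductively `A_n` has `n - 1` distinct negative roots,
which is all of them since `deg A_n ≤ n - 1`.
-/
open Polynomial

/-- The cardinal B-spline of order `m`. -/
noncomputable def cardinalBSpline (m : ℕ) (x : ℝ) : ℝ :=
  (1 / (m.factorial : ℝ)) *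
    ∑ k ∈ Finset.range (m + 2), (-1 : ℝ) ^ k * ((m + 1).choose k : ℝ) * (max (x - k) 0) ^ m

/-- The Euler–Frobenius polynomial `E_n(z) = n! ∑_{j=1}^{n} N_n(j) z^{j-1}`, over ℂ. -/
noncomputable def eulerFrobenius (n : ℕ) : Polynomial ℂ :=
  ∑ j ∈ Finset.range n, Polynomial.C ((n.factorial : ℂ) * (cardinalBSpline n (j + 1) : ℂ)) * X ^ j

open Filter Topology

section

open Set

theorem exists_lt_deriv_eq_zero_of_tendsto_atBot {f : ℝ → ℝ} {b l : ℝ}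
    (hbot : Tendsto f atBot (𝓝 l)) (hb : Tendsto f (𝓝[<] b) (𝓝 l)) :
    ∃ c < b, deriv f c = 0 := by
  -- Rolle's theorem on `(0, 1)` for `u ↦ f (b + log u)`.
  have hlog : Tendsto (fun u => b + Real.log u) (𝓝[<] 1) (𝓝[<] b) := by
    refine tendsto_nhdsWithin_iff.2 ⟨?_, ?_⟩
    · simpa using (Real.continuousAt_log one_ne_zero).tendsto.const_add b |>.mono_left
        nhdsWithin_le_nhds
    · filter_upwards [Ioo_mem_nhdsLT one_pos] with u hu
      simpa using Real.log_neg hu.1 hu.2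
  obtain ⟨c, hc, hdc⟩ := exists_deriv_eq_zero' one_pos
    (hbot.comp (tendsto_atBot_add_const_left _ b Real.tendsto_log_nhdsGT_zero)) (hb.comp hlog)
  refine ⟨b + Real.log c, by simpa using Real.log_neg hc.1 hc.2, ?_⟩
  by_cases hdiff : DifferentiableAt ℝ f (b + Real.log c)
  · have := (hdiff.hasDerivAt.comp c ((Real.hasDerivAt_log hc.1.ne').const_add b)).deriv
    rw [hdc] at this
    simpa [hc.1.ne'] using this.symm
  · exact deriv_zero_of_not_differentiableAt hdiff

theorem exists_finset_deriv_eq_zero_of_tendsto_atBot {f : ℝ → ℝ} {l b : ℝ} (Z : Finset ℝ)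
    (hZ : ∀ z ∈ Z, z < b ∧ f z = l) (hfb : f b = l) (hf : ContinuousOn f (Iic b))
    (hbot : Tendsto f atBot (𝓝 l)) :
    ∃ S : Finset ℝ, S.card = Z.card + 1 ∧ ∀ x ∈ S, x < b ∧ deriv f x = 0 := by
  induction Z using Finset.induction_on_max generalizing b with
  | empty =>
    obtain ⟨c, hcb, hc⟩ := exists_lt_deriv_eq_zero_of_tendsto_atBot hbot
      (hfb ▸ (hf.continuousWithinAt self_mem_Iic).tendsto.mono_left
        (nhdsWithin_mono _ Iio_subset_Iic_self))
    exact ⟨{c}, rfl, by simpa using ⟨hcb, hc⟩⟩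
  | insert a Z hZa ih =>
    obtain ⟨hab, hfa⟩ := hZ a (Finset.mem_insert_self a Z)
    obtain ⟨S, hS, hSa⟩ :=
      ih (fun z hz => ⟨hZa z hz, (hZ z (Finset.mem_insert_of_mem hz)).2⟩) hfa
        (hf.mono (Iic_subset_Iic.2 hab.le))
    obtain ⟨c, hc, hdc⟩ :=
      exists_deriv_eq_zero hab (hf.mono Icc_subset_Iic_self) (hfa.trans hfb.symm)
    have hcS : c ∉ S := fun h => (hSa c h).1.not_gt hc.1
    refine ⟨insert c S, ?_, ?_⟩
    · rw [Finset.card_insert_of_notMem hcS, hS,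
        Finset.card_insert_of_notMem fun h => (hZa a h).false]
    · simp only [Finset.mem_insert, forall_eq_or_imp]
      exact ⟨⟨hc.2, hdc⟩, fun x hx => ⟨(hSa x hx).1.trans hab, (hSa x hx).2⟩⟩

end

lemma coeff_X_mul_derivative {R : Type*} [Semiring R] (p : R[X]) (k : ℕ) :
    (X * derivative p).coeff k = p.coeff k * k := by
  rcases k with _ | k
  · simp
  · simp [coeff_derivative]

lemma Nat.cast_choose_succ_right_eq {R : Type*} [Ring R] (n i : ℕ) :
    (n.choose (i + 1) : R) * (i + 1) = n.choose i * (n - i) := by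
  rcases le_or_gt i n with hi | hi
  · rw [← Nat.cast_sub hi]
    exact_mod_cast congrArg (Nat.cast (R := R)) (Nat.choose_succ_right_eq n i)
  · simp [Nat.choose_eq_zero_of_lt hi, Nat.choose_eq_zero_of_lt (Nat.lt_succ_of_lt hi)]

section

open Finset

noncomputable def eulerian (n j : ℕ) : ℝ :=
  ∑ i ∈ range (j + 1), (-1 : ℝ) ^ i * ((n + 1).choose i : ℝ) * ((j : ℝ) + 1 - i) ^ n

@[simp] lemma eulerian_zero_right (n : ℕ) : eulerian n 0 = 1 := by
  simp [eulerian]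

lemma eulerian_succ_succ (n k : ℕ) :
    eulerian (n + 1) (k + 1) = (k + 2) * eulerian n (k + 1) + (n - k) * eulerian n k := by
  simp only [eulerian]
  rw [sum_range_succ' _ (k + 1), sum_range_succ' _ (k + 1), mul_add, mul_sum, mul_sum]
  conv_rhs => rw [add_right_comm, ← sum_add_distrib]
  congr 1
  · refine sum_congr rfl fun i _ => ?_
    have hpascal := Nat.choose_succ_succ' (n + 1) i
    have hchoose := Nat.cast_choose_succ_right_eq (R := ℝ) (n + 1) i
    rw [hpascal]
    push_cast at hchoose ⊢
    linear_combination (-1 : ℝ) ^ i * ((k : ℝ) + 1 - i) ^ n * hchoose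
  · simp only [pow_zero, Nat.choose_zero_right]
    push_cast
    ring

lemma eulerian_eq_zero {n j : ℕ} (hnj : n ≤ j) (hj : j ≠ 0) : eulerian n j = 0 := by
  induction n generalizing j with
  | zero =>
    obtain ⟨k, rfl⟩ := Nat.exists_eq_succ_of_ne_zero hj
    rw [eulerian, sum_range_succ', sum_range_succ']
    simp [Nat.choose_eq_zero_of_lt]
  | succ n ih =>
    obtain ⟨k, rfl⟩ := Nat.exists_eq_succ_of_ne_zero hj
    rw [eulerian_succ_succ, ih (by omega) k.succ_ne_zero]
    rcases Nat.eq_zero_or_pos k with rfl | hk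
    · simp [show n = 0 by omega]
    · simp [ih (by omega) hk.ne']

lemma factorial_mul_cardinalBSpline (n j : ℕ) (hn : n ≠ 0) (hj : j ≤ n + 1) :
    (n.factorial : ℝ) * cardinalBSpline n ((j : ℝ) + 1) = eulerian n j := by
  rw [cardinalBSpline, ← mul_assoc, mul_one_div_cancel (by positivity), one_mul, eulerian,
    ← sum_subset (range_subset_range.2 (by omega : j + 1 ≤ n + 2))]
  · refine sum_congr rfl fun i hi => ?_
    have hij : (i : ℝ) ≤ j := by exact_mod_cast Nat.lt_succ_iff.1 (mem_range.1 hi)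
    rw [max_eq_left (by linarith), add_sub_right_comm]
  · intro i _ hi
    have hij : (j : ℝ) + 1 ≤ i := by exact_mod_cast not_lt.1 (mt mem_range.2 hi)
    rw [max_eq_right (by linarith), zero_pow hn, mul_zero]

-- `eulerianPoly 0 = 0`, not the customary `A_0 = 1`.
noncomputable def eulerianPoly (n : ℕ) : ℝ[X] :=
  ∑ j ∈ range n, C (eulerian n j) * X ^ j

lemma coeff_eulerianPoly {n : ℕ} (hn : n ≠ 0) (j : ℕ) :
    (eulerianPoly n).coeff j = eulerian n j := by
  simp only [eulerianPoly, finsetSum_coeff, coeff_C_mul_X_pow, sum_ite_eq, mem_range]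
  split_ifs with hj
  · rfl
  · exact (eulerian_eq_zero (not_lt.1 hj) (by omega)).symm

lemma natDegree_eulerianPoly_le (n : ℕ) : (eulerianPoly n).natDegree ≤ n - 1 :=
  natDegree_sum_le_of_forall_le _ _ fun j hj =>
    (natDegree_C_mul_X_pow_le _ _).trans (by simp at hj; omega)

lemma eulerianPoly_ne_zero {n : ℕ} (hn : n ≠ 0) : eulerianPoly n ≠ 0 := fun h => by
  simpa [h] using coeff_eulerianPoly hn 0

lemma eulerianPoly_succ {n : ℕ} (hn : n ≠ 0) :
    eulerianPoly (n + 1) =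
      (1 + C (n : ℝ) * X) * eulerianPoly n + X * (1 - X) * derivative (eulerianPoly n) := by
  ext k
  rcases k with _ | k
  · simp [coeff_eulerianPoly hn, coeff_eulerianPoly n.succ_ne_zero]
  · simp only [coeff_eulerianPoly n.succ_ne_zero, eulerian_succ_succ, add_mul, mul_sub, sub_mul,
      one_mul, mul_one, mul_assoc, coeff_add, coeff_sub, coeff_C_mul, coeff_X_mul,
      coeff_X_mul_derivative, coeff_derivative, coeff_eulerianPoly hn]
    ring

noncomputable def eulerianFrac (n : ℕ) (t : ℝ) : ℝ :=
  t * (eulerianPoly n).eval t / (1 - t) ^ (n + 1)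

lemma hasDerivAt_eulerianFrac {n : ℕ} (hn : n ≠ 0) {t : ℝ} (ht : t ≠ 1) :
    HasDerivAt (eulerianFrac n) ((eulerianPoly (n + 1)).eval t / (1 - t) ^ (n + 2)) t := by
  have hsub : (1 : ℝ) - t ≠ 0 := sub_ne_zero.2 ht.symm
  have hnum : HasDerivAt (fun t => t * (eulerianPoly n).eval t)
      (1 * (eulerianPoly n).eval t + t * (derivative (eulerianPoly n)).eval t) t :=
    (hasDerivAt_id t).mul ((eulerianPoly n).hasDerivAt t)
  have hden : HasDerivAt (fun t => (1 - t) ^ (n + 1)) ((n + 1 : ℕ) * (1 - t) ^ n * -1) t := by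
    simpa using ((hasDerivAt_id t).const_sub 1).fun_pow (n + 1)
  refine (hnum.div hden (pow_ne_zero _ hsub)).congr_deriv ?_
  simp only [eulerianPoly_succ hn, eval_add, eval_mul, eval_one, eval_C, eval_X, eval_sub]
  field_simp
  push_cast
  ring

lemma tendsto_eulerianFrac_atBot {n : ℕ} (hn : n ≠ 0) :
    Tendsto (eulerianFrac n) atBot (𝓝 0) := by
  have hdeg : (X * eulerianPoly n).degree < ((1 - X) ^ (n + 1) : ℝ[X]).degree := by
    have hQ : ((1 - X) ^ (n + 1) : ℝ[X]).degree = (n + 1 : ℕ) := by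
      rw [degree_pow, ← neg_sub, degree_neg, ← C_1, degree_X_sub_C, nsmul_one]
    refine hQ ▸ (degree_le_natDegree.trans_lt ?_)
    have := (natDegree_mul_le (p := X) (q := eulerianPoly n)).trans
      (add_le_add natDegree_X_le (natDegree_eulerianPoly_le n))
    exact_mod_cast (by omega : (X * eulerianPoly n).natDegree < n + 1)
  unfold eulerianFrac
  simpa using div_tendsto_atBot_zero_of_degree_lt _ _ hdeg

theorem exists_finset_neg_roots_eulerianPoly (n : ℕ) :
    ∃ Z : Finset ℝ, Z.card = n ∧ ∀ x ∈ Z, x < 0 ∧ (eulerianPoly (n + 1)).IsRoot x := by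
  induction n with
  | zero => exact ⟨∅, rfl, by simp⟩
  | succ n ih =>
    obtain ⟨Z, hZ, hZroot⟩ := ih
    have hcont : ContinuousOn (eulerianFrac (n + 1)) (Set.Iic 0) := fun t ht =>
      (hasDerivAt_eulerianFrac n.succ_ne_zero
        (by linarith [Set.mem_Iic.1 ht] : t ≠ 1)).continuousAt.continuousWithinAt
    obtain ⟨S, hS, hSroot⟩ := exists_finset_deriv_eq_zero_of_tendsto_atBot (l := 0) Z
      (fun z hz => ⟨(hZroot z hz).1, by simp [eulerianFrac, (hZroot z hz).2.eq_zero]⟩)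
      (by simp [eulerianFrac]) hcont (tendsto_eulerianFrac_atBot n.succ_ne_zero)
    refine ⟨S, by rw [hS, hZ], fun x hx => ⟨(hSroot x hx).1, ?_⟩⟩
    have hx1 : (1 : ℝ) - x ≠ 0 := by linarith [(hSroot x hx).1]
    have := (hasDerivAt_eulerianFrac n.succ_ne_zero (sub_ne_zero.1 hx1).symm).deriv
    rwa [(hSroot x hx).2, eq_comm, div_eq_zero_iff, or_iff_left (pow_ne_zero _ hx1)] at this

lemma eulerFrobenius_eq_map {n : ℕ} (hn : n ≠ 0) :
    eulerFrobenius n = (eulerianPoly n).map (algebraMap ℝ ℂ) := by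
  rw [eulerFrobenius, eulerianPoly, Polynomial.map_sum]
  refine sum_congr rfl fun j hj => ?_
  rw [Polynomial.map_mul, Polynomial.map_C, Polynomial.map_pow, map_X,
    ← factorial_mul_cardinalBSpline n j hn (by have := mem_range.1 hj; omega)]
  simp

lemma exists_finset_roots_eulerFrobenius {n : ℕ} (hn : n ≠ 0) :
    ∃ Z : Finset ℝ, (∀ x ∈ Z, x < 0) ∧
      (eulerFrobenius n).roots = (Z.image ((↑) : ℝ → ℂ)).val := by
  obtain ⟨Z, hZ, hZroot⟩ := exists_finset_neg_roots_eulerianPoly (n - 1)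
  rw [Nat.sub_add_cancel (Nat.one_le_iff_ne_zero.2 hn)] at hZroot
  refine ⟨Z, fun x hx => (hZroot x hx).1, ?_⟩
  rw [eulerFrobenius_eq_map hn]
  refine roots_eq_of_natDegree_le_card_of_ne_zero (fun x hx => ?_) ?_ ?_
  · obtain ⟨r, hr, rfl⟩ := mem_image.1 hx
    simpa using (hZroot r hr).2.map (f := algebraMap ℝ ℂ)
  · rw [card_image_of_injective _ Complex.ofReal_injective, hZ]
    exact natDegree_map_le.trans (natDegree_eulerianPoly_le n)
  · exact (Polynomial.map_ne_zero_iff (algebraMap ℝ ℂ).injective).2 (eulerianPoly_ne_zero hn)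

end

theorem eulerFrobenius_roots_real_neg_simple (m : ℕ) (hm : 1 ≤ m) :
    (∀ z ∈ (eulerFrobenius (2 * m - 1)).roots, ∃ r : ℝ, z = (r : ℂ) ∧ r < 0) ∧
      (eulerFrobenius (2 * m - 1)).roots.Nodup := by
  obtain ⟨Z, hZneg, hroots⟩ := exists_finset_roots_eulerFrobenius (n := 2 * m - 1) (by omega)
  rw [hroots]
  refine ⟨fun z hz => ?_, (Z.image _).nodup⟩
  obtain ⟨r, hr, rfl⟩ := Finset.mem_image.1 hz
  exact ⟨r, rfl, hZneg r hr⟩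
end
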